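/- arXiv:2507.00194 — 2 statements merged into one kernel-verified Lean document; each statement's English description precedes it below -/
import Mathlib

section
/- Let P be an algebra of S-probabilities whose 0,1-extension P̄ is a Boolean algebra of S̄-probabilities. Let q be a varying S-probability that is not comparable to any element of P ∖ {0, 1} (i.e., for every p ∈ P with p ≠ 0 and p ≠ 1, neither q ≤ p nor p ≤ q), let c ∈ ℝ with 0 < c < 1, and set q̄ := (q, c). Assume there exists p ∈ P with p ≠ 0 and p ≠ 1 such that either min(p(s), q(s)) ≤ 1/2 for all s ∈ S or max(p(s), q(s)) ≥ 1/2 for all s ∈ S. Then (1) there exists an algebra Q of S̄-probabilities with P̄ ∪ {q̄} ⊆ Q (namely Q = P̄ ∪ {q̄, (1−q, 1−c)}), but (2) there exists no Boolean algebra Q of S̄-probabilities with P̄ ∪ {q̄} ⊆ Q. -/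
/-- An `S`-probability: a function `p : S → ℝ` with `0 ≤ p s ≤ 1` for all `s`. -/
def IsProb (S : Type*) (p : S → ℝ) : Prop := ∀ s, 0 ≤ p s ∧ p s ≤ 1

/-- An algebra of `S`-probabilities: a set of `S`-probabilities containing the constant `0`,
closed under `p ↦ 1 - p`, and containing `p + q + r` for pairwise orthogonal `p, q, r`
(where `p ⊥ q` means `p ≤ 1 - q`). -/
def IsAlg (S : Type*) (P : Set (S → ℝ)) : Prop :=
  (∀ p ∈ P, IsProb S p) ∧
  (0 : S → ℝ) ∈ P ∧
  (∀ p ∈ P, 1 - p ∈ P) ∧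
  ∀ p q r : S → ℝ, p ∈ P → q ∈ P → r ∈ P →
    p ≤ 1 - q → q ≤ 1 - r → r ≤ 1 - p → p + q + r ∈ P

/-- A function `p : S → ℝ` is varying if it is neither everywhere `≤ 1/2`
nor everywhere `≥ 1/2`. -/
def Varying (S : Type*) (p : S → ℝ) : Prop :=
  ¬(∀ s, p s ≤ 1 / 2) ∧ ¬(∀ s, 1 / 2 ≤ p s)

/-- `m` is the infimum of `p` and `q` within the poset `(P, ≤)`. -/
def IsInfIn (S : Type*) (P : Set (S → ℝ)) (p q m : S → ℝ) : Prop :=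
  m ∈ P ∧ m ≤ p ∧ m ≤ q ∧ ∀ u ∈ P, u ≤ p → u ≤ q → u ≤ m

/-- `j` is the supremum of `p` and `q` within the poset `(P, ≤)`. -/
def IsSupIn (S : Type*) (P : Set (S → ℝ)) (p q j : S → ℝ) : Prop :=
  j ∈ P ∧ p ≤ j ∧ q ≤ j ∧ ∀ u ∈ P, p ≤ u → q ≤ u → j ≤ u

/-- A Boolean algebra of `S`-probabilities: an algebra of `S`-probabilities in which any two
elements have an infimum and a supremum within `(P, ≤)`, the resulting lattice is distributive,
and for every `p ∈ P` the infimum of `p` and `1 - p` is `0` and their supremum is `1`. -/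
def IsBooleanAlg (S : Type*) (P : Set (S → ℝ)) : Prop :=
  IsAlg S P ∧
  (∀ p ∈ P, ∀ q ∈ P, (∃ m, IsInfIn S P p q m) ∧ (∃ j, IsSupIn S P p q j)) ∧
  (∀ p ∈ P, ∀ q ∈ P, ∀ r ∈ P, ∀ qr a pq pr b : S → ℝ,
    IsSupIn S P q r qr → IsInfIn S P p qr a →
    IsInfIn S P p q pq → IsInfIn S P p r pr → IsSupIn S P pq pr b → a = b) ∧
  ∀ p ∈ P, IsInfIn S P p (1 - p) 0 ∧ IsSupIn S P p (1 - p) 1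

/-- The extension `(p, c)` of `p : S → ℝ` to `S̄ = S ∪ {s̄}` (modelled as `Option S`,
with `none` playing the role of the new state `s̄`), taking the value `c` at `s̄`. -/
def extFun {S : Type*} (p : S → ℝ) (c : ℝ) : Option S → ℝ :=
  fun x => Option.elim x c p

/-- The `0,1`-extension `P̄ = {(p,0) : p ∈ P} ∪ {(p,1) : p ∈ P}` of a set `P` of
`S`-probabilities. -/
def extSet {S : Type*} (P : Set (S → ℝ)) : Set (Option S → ℝ) :=
  {f | ∃ p ∈ P, f = extFun p 0 ∨ f = extFun p 1}

/-- `p` and `q` are partially reciprocal below `1/2`. -/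
def PRBelow (S : Type*) (p q : S → ℝ) : Prop := ∀ s, min (p s) (q s) ≤ 1 / 2

/-- `p` and `q` are partially reciprocal above `1/2`. -/
def PRAbove (S : Type*) (p q : S → ℝ) : Prop := ∀ s, 1 / 2 ≤ max (p s) (q s)

/-- `p` and `q` are reciprocal. -/
def Reciprocal (S : Type*) (p q : S → ℝ) : Prop := PRBelow S p q ∧ PRAbove S p q

/-- Two functions are incomparable in the pointwise order. -/
def Incomp {S : Type*} (a b : S → ℝ) : Prop := ¬a ≤ b ∧ ¬b ≤ a

/-- An algebra of `S`-probabilities of type `MO₂`,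
with the six pairwise distinct elements `0, p₁, 1 - p₁, p₂, 1 - p₂, 1` such that
`p₁, 1 - p₁, p₂, 1 - p₂` are pairwise incomparable. -/
def IsMO2 (S : Type*) (P : Set (S → ℝ)) (p1 p2 : S → ℝ) : Prop :=
  IsAlg S P ∧
  P = {0, p1, 1 - p1, p2, 1 - p2, 1} ∧
  ([(0 : S → ℝ), p1, 1 - p1, p2, 1 - p2, 1].Pairwise (· ≠ ·)) ∧
  Incomp p1 (1 - p1) ∧ Incomp p1 p2 ∧ Incomp p1 (1 - p2) ∧
  Incomp (1 - p1) p2 ∧ Incomp (1 - p1) (1 - p2) ∧ Incomp p2 (1 - p2)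

/-- `f` is an atom of `P`: a minimal element of `P \ {0}`. -/
def IsAtomOf (S : Type*) (P : Set (S → ℝ)) (f : S → ℝ) : Prop :=
  f ∈ P ∧ f ≠ 0 ∧ ∀ g ∈ P, g ≠ 0 → g ≤ f → g = f

/-!
Adjoining `q̄` and `1 - q̄` to `P̄` gives an algebra because, `q` being varying and incomparable
with every nontrivial element of `P`, the only elements of `P̄` orthogonal to `q̄` or to `1 - q̄`
are `0`, and neither `q̄` nor `1 - q̄` is orthogonal to itself; so every orthogonal triple meeting
`{q̄, 1 - q̄}` sums to `q̄`, `1 - q̄` or `1`.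

No Boolean algebra `Q` can contain `P̄ ∪ {q̄}`: in an algebra an element bounded by `1/2` is `0`,
so if `min (p, q) ≤ 1/2` the infimum of `(p, 0)` and `q̄` in `Q` is `0`, and in a Boolean algebra
disjoint elements are orthogonal. Hence `q ≤ 1 - p`, contradicting incomparability. The case
`max (p, q) ≥ 1/2` is the same argument applied to `1 - p` and `1 - q̄`.
-/

section Algebra

variable {T : Type*} {Q : Set (T → ℝ)}

theorem IsAlg.one_mem (hQ : IsAlg T Q) : (1 : T → ℝ) ∈ Q := by
  simpa using hQ.2.2.1 0 hQ.2.1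

/-- The witness is `a + a + (1 - a) ∈ Q`, which is `≤ 1` only if `a = 0`. -/
theorem IsAlg.eq_zero_of_le_half (hQ : IsAlg T Q) {a : T → ℝ} (ha : a ∈ Q)
    (hhalf : ∀ x, a x ≤ 1 / 2) : a = 0 := by
  obtain ⟨hprob, -, hcompl, hsum⟩ := hQ
  have hmem : a + a + (1 - a) ∈ Q :=
    hsum a a (1 - a) ha ha (hcompl a ha) (fun x => by simp; linarith [hhalf x])
      (fun x => by simp) le_rfl
  funext x
  have h1 := (hprob _ hmem x).2
  have h2 := (hprob a ha x).1
  simp only [Pi.add_apply, Pi.sub_apply, Pi.one_apply] at h1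
  simp only [Pi.zero_apply]
  linarith

/-- Distributivity gives `a = a ⊓ (b ⊔ (1 - b)) = (a ⊓ b) ⊔ (a ⊓ (1 - b)) = a ⊓ (1 - b)`. -/
theorem IsBooleanAlg.le_one_sub_of_isInfIn_zero (hQ : IsBooleanAlg T Q) {a b : T → ℝ}
    (ha : a ∈ Q) (hb : b ∈ Q) (hab : IsInfIn T Q a b 0) : a ≤ 1 - b := by
  obtain ⟨hAlg, hlat, hdist, hcompl⟩ := hQ
  have hb' : (1 : T → ℝ) - b ∈ Q := hAlg.2.2.1 b hb
  obtain ⟨m, hm⟩ := (hlat a ha (1 - b) hb').1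
  have hinf_one : IsInfIn T Q a 1 a :=
    ⟨ha, le_rfl, fun x => (hAlg.1 a ha x).2, fun _ _ h _ => h⟩
  have hsup_zero : IsSupIn T Q 0 m m :=
    ⟨hm.1, fun x => (hAlg.1 m hm.1 x).1, le_rfl, fun _ _ _ h => h⟩
  rw [hdist a ha b hb (1 - b) hb' 1 a 0 m m (hcompl b hb).2 hinf_one hab hm hsup_zero]
  exact hm.2.2.1

theorem IsBooleanAlg.le_one_sub_of_min_le_half (hQ : IsBooleanAlg T Q) {a b : T → ℝ}
    (ha : a ∈ Q) (hb : b ∈ Q) (hmin : ∀ x, min (a x) (b x) ≤ 1 / 2) : a ≤ 1 - b := by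
  obtain ⟨m, hm⟩ := (hQ.2.1 a ha b hb).1
  have hm0 : m = 0 :=
    hQ.1.eq_zero_of_le_half hm.1 fun x => (le_min (hm.2.1 x) (hm.2.2.1 x)).trans (hmin x)
  subst hm0
  exact hQ.le_one_sub_of_isInfIn_zero ha hb hm

end Algebra

section Adjoin

variable {T : Type*} {A : Set (T → ℝ)} {r : T → ℝ}

theorem one_sub_mem_pair {x : T → ℝ} (hx : x ∈ ({r, 1 - r} : Set (T → ℝ))) :
    1 - x ∈ ({r, 1 - r} : Set (T → ℝ)) := by
  rcases hx with rfl | rfl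
  exacts [Or.inr rfl, Or.inl (sub_sub_cancel 1 r)]

variable (hself : ∀ x ∈ ({r, 1 - r} : Set (T → ℝ)), ¬x ≤ 1 - x)
  (horth : ∀ x ∈ ({r, 1 - r} : Set (T → ℝ)), ∀ a ∈ A, a ≤ 1 - x → a = 0)
include hself horth

theorem eq_zero_or_eq_one_sub_of_le_one_sub {x y : T → ℝ} (hx : x ∈ ({r, 1 - r} : Set _))
    (hy : y ∈ A ∪ {r, 1 - r}) (hyx : y ≤ 1 - x) : y = 0 ∨ y = 1 - x := by
  rcases hy with hy | hy
  · exact Or.inl (horth x hx y hy hyx)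
  · right
    rcases hx with rfl | rfl <;> rcases hy with rfl | rfl
    · exact absurd hyx (hself _ (Or.inl rfl))
    · rfl
    · simp
    · exact absurd hyx (hself _ (Or.inr rfl))

theorem add_add_mem_union_pair (hA : IsAlg T A) {x y z : T → ℝ}
    (hx : x ∈ ({r, 1 - r} : Set _)) (hy : y ∈ A ∪ {r, 1 - r}) (hz : z ∈ A ∪ {r, 1 - r})
    (hyx : y ≤ 1 - x) (hzx : z ≤ 1 - x) (hyz : y ≤ 1 - z) : x + y + z ∈ A ∪ {r, 1 - r} := by
  have hone : x + (1 - x) = 1 := by abel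
  rcases eq_zero_or_eq_one_sub_of_le_one_sub hself horth hx hy hyx with rfl | rfl <;>
    rcases eq_zero_or_eq_one_sub_of_le_one_sub hself horth hx hz hzx with rfl | rfl
  · rw [add_zero, add_zero]
    exact Or.inr hx
  · rw [add_zero, hone]
    exact Or.inl hA.one_mem
  · rw [add_zero, hone]
    exact Or.inl hA.one_mem
  · exact absurd hyz (hself _ (one_sub_mem_pair hx))

theorem IsAlg.union_pair (hA : IsAlg T A) (hr : IsProb T r) : IsAlg T (A ∪ {r, 1 - r}) := by
  refine ⟨?_, Or.inl hA.2.1, ?_, ?_⟩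
  · rintro f (hf | rfl | rfl)
    · exact hA.1 f hf
    · exact hr
    · exact fun x => ⟨by simp [(hr x).2], by simp [(hr x).1]⟩
  · rintro f (hf | hf)
    · exact Or.inl (hA.2.2.1 f hf)
    · exact Or.inr (one_sub_mem_pair hf)
  · intro f g h hf hg hh hfg hgh hhf
    by_cases hfr : f ∈ ({r, 1 - r} : Set _)
    · exact add_add_mem_union_pair hself horth hA hfr hg hh (le_sub_comm.1 hfg) hhf hgh
    by_cases hgr : g ∈ ({r, 1 - r} : Set _)
    · rw [add_comm f g]
      exact add_add_mem_union_pair hself horth hA hgr hf hh hfg (le_sub_comm.1 hgh)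
        (le_sub_comm.1 hhf)
    by_cases hhr : h ∈ ({r, 1 - r} : Set _)
    · rw [show f + g + h = h + f + g by abel]
      exact add_add_mem_union_pair hself horth hA hhr hf hg (le_sub_comm.1 hhf) hgh hfg
    exact Or.inl (hA.2.2.2 f g h (hf.resolve_right hfr) (hg.resolve_right hgr)
      (hh.resolve_right hhr) hfg hgh hhf)

end Adjoin

section Extension

variable {S : Type*} {P : Set (S → ℝ)}

theorem one_sub_extFun (p : S → ℝ) (c : ℝ) :
    (1 : Option S → ℝ) - extFun p c = extFun (1 - p) (1 - c) := by
  funext x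
  cases x <;> simp [extFun]

theorem extFun_restrict (f : Option S → ℝ) : extFun (fun s => f (some s)) (f none) = f := by
  funext x
  cases x <;> rfl

theorem mem_extSet_iff {f : Option S → ℝ} :
    f ∈ extSet P ↔ (fun s => f (some s)) ∈ P ∧ (f none = 0 ∨ f none = 1) := by
  constructor
  · rintro ⟨p, hp, rfl | rfl⟩ <;> exact ⟨hp, by simp [extFun]⟩
  · rintro ⟨hp, hc⟩
    refine ⟨_, hp, ?_⟩
    rcases hc with hc | hc <;> [left; right] <;> rw [← hc, extFun_restrict]

theorem add_add_eq_zero_or_one {a b c : ℝ} (ha : a = 0 ∨ a = 1) (hb : b = 0 ∨ b = 1)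
    (hc : c = 0 ∨ c = 1) (hab : a ≤ 1 - b) (hbc : b ≤ 1 - c) (hca : c ≤ 1 - a) :
    a + b + c = 0 ∨ a + b + c = 1 := by
  rcases ha with rfl | rfl <;> rcases hb with rfl | rfl <;> rcases hc with rfl | rfl <;>
    norm_num at *

theorem IsAlg.extSet (hP : IsAlg S P) : IsAlg (Option S) (extSet P) := by
  obtain ⟨hprob, h0, hcompl, hsum⟩ := hP
  refine ⟨?_, mem_extSet_iff.2 ⟨h0, Or.inl rfl⟩, ?_, ?_⟩
  · intro f hf x
    rw [mem_extSet_iff] at hf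
    cases x with
    | none => rcases hf.2 with h | h <;> simp [h]
    | some s => exact hprob _ hf.1 s
  · intro f hf
    rw [mem_extSet_iff] at hf ⊢
    exact ⟨hcompl _ hf.1, by rcases hf.2 with h | h <;> simp [h]⟩
  · intro f g h hf hg hh hfg hgh hhf
    rw [mem_extSet_iff] at hf hg hh ⊢
    refine ⟨hsum _ _ _ hf.1 hg.1 hh.1 (fun s => hfg (some s)) (fun s => hgh (some s))
      (fun s => hhf (some s)), ?_⟩
    exact add_add_eq_zero_or_one hf.2 hg.2 hh.2 (hfg none) (hgh none) (hhf none)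

theorem eq_zero_of_le_one_sub_extFun {q : S → ℝ} {c : ℝ} (hc : 0 < c)
    (hq : ∀ p ∈ P, p ≤ 1 - q → p = 0) {a : Option S → ℝ} (ha : a ∈ extSet P)
    (haq : a ≤ 1 - extFun q c) : a = 0 := by
  rw [mem_extSet_iff] at ha
  have hrestrict : (fun s => a (some s)) = 0 := hq _ ha.1 fun s => haq (some s)
  have hnone : a none = 0 := by
    have := haq none
    simp only [extFun, Pi.sub_apply, Pi.one_apply, Option.elim] at this
    rcases ha.2 with h | h <;> [exact h; linarith]
  rw [← extFun_restrict a, hrestrict, hnone]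
  funext x
  cases x <;> rfl

theorem not_extFun_le_one_sub_self {q : S → ℝ} (hq : ¬∀ s, q s ≤ 1 / 2) (c : ℝ) :
    ¬extFun q c ≤ 1 - extFun q c := by
  push Not at hq
  obtain ⟨s, hs⟩ := hq
  intro h
  have := h (some s)
  simp only [extFun, Pi.sub_apply, Pi.one_apply, Option.elim] at this
  linarith

theorem le_one_sub_of_extFun_mem {Q : Set (Option S → ℝ)} (hQ : IsBooleanAlg (Option S) Q)
    {p q : S → ℝ} {c : ℝ} (hp : extFun p 0 ∈ Q) (hq : extFun q c ∈ Q)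
    (hmin : ∀ s, min (p s) (q s) ≤ 1 / 2) : p ≤ 1 - q := by
  have h := hQ.le_one_sub_of_min_le_half hp hq fun x => by
    cases x with
    | none => simp [extFun]
    | some s => exact hmin s
  exact fun s => h (some s)

end Extension

section Incomparable

variable {S : Type*} {P : Set (S → ℝ)} {q : S → ℝ}

theorem Varying.one_sub (hq : Varying S q) : Varying S (1 - q) := by
  constructor <;> intro h
  · exact hq.2 fun s => by linarith [h s, show (1 - q) s = 1 - q s from rfl]
  · exact hq.1 fun s => by linarith [h s, show (1 - q) s = 1 - q s from rfl]

theorem incomp_one_sub (hP : IsAlg S P) (hnc : ∀ p ∈ P, p ≠ 0 → p ≠ 1 → ¬q ≤ p ∧ ¬p ≤ q) :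
    ∀ p ∈ P, p ≠ 0 → p ≠ 1 → ¬1 - q ≤ p ∧ ¬p ≤ 1 - q := by
  intro p hp hp0 hp1
  have h := hnc (1 - p) (hP.2.2.1 p hp) (fun h => hp1 (sub_eq_zero.1 h).symm)
    (fun h => hp0 (by simpa using h))
  exact ⟨fun h' => h.2 (sub_le_comm.1 h'), fun h' => h.1 (le_sub_comm.1 h')⟩

theorem eq_zero_of_le_of_incomp (hqv : Varying S q)
    (hnc : ∀ p ∈ P, p ≠ 0 → p ≠ 1 → ¬q ≤ p ∧ ¬p ≤ q) {p : S → ℝ} (hp : p ∈ P)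
    (hpq : p ≤ q) : p = 0 := by
  by_contra hp0
  by_cases hp1 : p = 1
  · subst hp1
    exact hqv.2 fun s => by linarith [hpq s, show (1 : S → ℝ) s = 1 from rfl]
  · exact (hnc p hp hp0 hp1).2 hpq

end Incomparable

theorem stmt_5_general {S : Type*} {P : Set (S → ℝ)} (hP : IsAlg S P)
    {q : S → ℝ} (hq : IsProb S q) (hqv : Varying S q)
    (hnc : ∀ p ∈ P, p ≠ 0 → p ≠ 1 → ¬q ≤ p ∧ ¬p ≤ q)
    {c : ℝ} (hc0 : 0 < c) (hc1 : c < 1)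
    (hex : ∃ p ∈ P, p ≠ 0 ∧ p ≠ 1 ∧
      ((∀ s, min (p s) (q s) ≤ 1 / 2) ∨ (∀ s, 1 / 2 ≤ max (p s) (q s)))) :
    IsAlg (Option S) (extSet P ∪ {extFun q c, extFun (1 - q) (1 - c)}) ∧
    ¬∃ Q : Set (Option S → ℝ), IsBooleanAlg (Option S) Q ∧ extSet P ∪ {extFun q c} ⊆ Q := by
  have hzero : ∀ p ∈ P, p ≤ q → p = 0 := fun p => eq_zero_of_le_of_incomp hqv hnc
  have hzero' : ∀ p ∈ P, p ≤ 1 - q → p = 0 :=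
    fun p => eq_zero_of_le_of_incomp hqv.one_sub (incomp_one_sub hP hnc)
  constructor
  · rw [← one_sub_extFun]
    refine hP.extSet.union_pair ?_ ?_ ?_
    · rintro x (rfl | rfl)
      · exact not_extFun_le_one_sub_self hqv.1 c
      · rw [one_sub_extFun]
        exact not_extFun_le_one_sub_self hqv.one_sub.1 _
    · rintro x (rfl | rfl)
      · exact fun _ => eq_zero_of_le_one_sub_extFun hc0 hzero'
      · rw [one_sub_extFun]
        exact fun _ => eq_zero_of_le_one_sub_extFun (by linarith) (by simpa using hzero)
    · rintro (_ | s)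
      · exact ⟨hc0.le, hc1.le⟩
      · exact hq s
  · rintro ⟨Q, hQ, hsub⟩
    obtain ⟨p, hp, hp0, hp1, hbelow | habove⟩ := hex
    · exact hp0 (hzero' p hp (le_one_sub_of_extFun_mem hQ (hsub (Or.inl ⟨p, hp, Or.inl rfl⟩))
        (hsub (Or.inr rfl)) hbelow))
    · have hle := le_one_sub_of_extFun_mem (c := 1 - c) hQ
        (hsub (Or.inl ⟨1 - p, hP.2.2.1 p hp, Or.inl rfl⟩))
        (one_sub_extFun q c ▸ hQ.1.2.2.1 _ (hsub (Or.inr rfl)))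
        (fun s => by simp only [Pi.sub_apply, Pi.one_apply]; grind)
      rw [sub_sub_cancel] at hle
      exact hp1 (sub_eq_zero.1 (hzero _ (hP.2.2.1 p hp) hle)).symm

theorem stmt_5 {S : Type*} [Nonempty S] {P : Set (S → ℝ)} (hP : IsAlg S P)
    (hPbar : IsBooleanAlg (Option S) (extSet P))
    {q : S → ℝ} (hq : IsProb S q) (hqv : Varying S q)
    (hnc : ∀ p ∈ P, p ≠ 0 → p ≠ 1 → ¬q ≤ p ∧ ¬p ≤ q)
    {c : ℝ} (hc0 : 0 < c) (hc1 : c < 1)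
    (hex : ∃ p ∈ P, p ≠ 0 ∧ p ≠ 1 ∧
      ((∀ s, min (p s) (q s) ≤ 1 / 2) ∨ (∀ s, 1 / 2 ≤ max (p s) (q s)))) :
    IsAlg (Option S) (extSet P ∪ {extFun q c, extFun (1 - q) (1 - c)}) ∧
    ¬∃ Q : Set (Option S → ℝ), IsBooleanAlg (Option S) Q ∧ extSet P ∪ {extFun q c} ⊆ Q :=
  stmt_5_general hP hq hqv hnc hc0 hc1 hex
end

section
/- Let n ≥ 2 and let P be an algebra of S-probabilities that is a Boolean algebra of S-probabilities with exactly 2^n elements. Then there exist varying S-probabilities p₁, …, pₙ ∈ P (namely the atoms of the poset (P, ≤)) such that p₁ + ⋯ + pₙ = 1 (the constant function 1) and P = {Σ_{i∈I} pᵢ : I ⊆ {1, …, n}}. -/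
/-! The lattice operations of `P` turn it into a Boolean algebra whose complement is
`p ↦ 1 - p`, and in it the supremum of two disjoint elements is their pointwise sum: applying
the triple-sum axiom to `p`, `q` and `1 - (p ⊔ q)` gives `p + q ≤ p ⊔ q`. A finite Boolean
algebra is isomorphic to the powerset of its atoms, so `P` has `n` atoms, every element of `P`
is the sum of the atoms below it, and the atoms sum to `1`. An atom `p` is varying: `p ≤ 1/2`
everywhere would give `p ≤ 1 - p`, hence `p = 0`, and `p ≥ 1/2` everywhere would give
`1 - p ≤ p`, hence `p = 1`, which is impossible when there are at least two atoms. -/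

open Finset

section FiniteBooleanAlgebra

variable {α : Type*} [BooleanAlgebra α] [Fintype α]

theorem exists_finset_atoms_sup_eq (b : α) :
    ∃ t : Finset {a : α // IsAtom a}, t.sup Subtype.val = b := by
  classical
  let := Fintype.toCompleteAtomicBooleanAlgebra α
  refine ⟨(CompleteAtomicBooleanAlgebra.toSetOfIsAtom b).toFinset, ?_⟩
  rw [sup_eq_sSup_image, Set.coe_toFinset]
  exact CompleteAtomicBooleanAlgebra.toSetOfIsAtom.symm_apply_apply b

theorem card_eq_two_pow_card_atoms : Nat.card α = 2 ^ Nat.card {a : α // IsAtom a} := by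
  classical
  let := Fintype.toCompleteAtomicBooleanAlgebra α
  rw [Nat.card_congr CompleteAtomicBooleanAlgebra.toSetOfIsAtom.toEquiv,
    Nat.card_eq_fintype_card, Fintype.card_set, Nat.card_eq_fintype_card]

end FiniteBooleanAlgebra

theorem IsAtom.ne_top_of_ne {α : Type*} [PartialOrder α] [BoundedOrder α] {a b : α}
    (ha : IsAtom a) (hb : IsAtom b) (hab : a ≠ b) : a ≠ ⊤ := by
  rintro rfl
  exact (ha.le_iff.mp le_top).elim hb.1 hab.symm

theorem IsInfIn.unique {S : Type*} {P : Set (S → ℝ)} {p q m m' : S → ℝ}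
    (h : IsInfIn S P p q m) (h' : IsInfIn S P p q m') : m = m' :=
  le_antisymm (h'.2.2.2 m h.1 h.2.1 h.2.2.1) (h.2.2.2 m' h'.1 h'.2.1 h'.2.2.1)

theorem IsSupIn.unique {S : Type*} {P : Set (S → ℝ)} {p q j j' : S → ℝ}
    (h : IsSupIn S P p q j) (h' : IsSupIn S P p q j') : j = j' :=
  le_antisymm (h.2.2.2 j' h'.1 h'.2.1 h'.2.2.1) (h'.2.2.2 j h.1 h.2.1 h.2.2.1)

namespace IsAlg

variable {S : Type*} {P : Set (S → ℝ)} {p q : S → ℝ}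

theorem zero_mem (hP : IsAlg S P) : (0 : S → ℝ) ∈ P := hP.2.1

theorem sub_mem (hP : IsAlg S P) (hp : p ∈ P) : 1 - p ∈ P := hP.2.2.1 p hp

theorem one_mem_s15 (hP : IsAlg S P) : (1 : S → ℝ) ∈ P := by
  simpa using hP.sub_mem hP.zero_mem

theorem nonneg (hP : IsAlg S P) (hp : p ∈ P) : 0 ≤ p := fun s => (hP.1 p hp s).1

theorem le_one (hP : IsAlg S P) (hp : p ∈ P) : p ≤ 1 := fun s => (hP.1 p hp s).2

theorem add_mem (hP : IsAlg S P) (hp : p ∈ P) (hq : q ∈ P) (hpq : p ≤ 1 - q) :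
    p + q ∈ P := by
  simpa using hP.2.2.2 p q 0 hp hq hP.zero_mem hpq (by simpa using hP.le_one hq)
    (by simpa using hP.le_one hp)

theorem isSupIn_eq_add (hP : IsAlg S P) (hp : p ∈ P) (hq : q ∈ P) (hpq : p ≤ 1 - q)
    {j : S → ℝ} (hj : IsSupIn S P p q j) : j = p + q := by
  refine le_antisymm (hj.2.2.2 _ (hP.add_mem hp hq hpq) ?_ ?_) ?_
  · simpa using hP.nonneg hq
  · simpa using hP.nonneg hp
  have hmem : p + q + (1 - j) ∈ P := hP.2.2.2 p q (1 - j) hp hq (hP.sub_mem hj.1) hpq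
    (by rw [sub_sub_cancel]; exact hj.2.2.1) (sub_le_sub_left hj.2.1 1)
  intro s
  have := hP.le_one hmem s
  simp only [Pi.add_apply, Pi.sub_apply, Pi.one_apply] at this
  show p s + q s ≤ j s
  linarith

end IsAlg

theorem Set.pairwiseDisjoint_of_isAtom {α ι : Type*} [SemilatticeInf α] [OrderBot α]
    {f : ι → α} (hf : Function.Injective f) (ha : ∀ i, IsAtom (f i)) (s : Set ι) :
    s.PairwiseDisjoint f :=
  fun _ _ _ _ hij => (ha _).disjoint_of_ne (ha _) (hf.ne hij)

namespace IsBooleanAlg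

variable {S : Type*} {P : Set (S → ℝ)}

theorem isAlg (hP : IsBooleanAlg S P) : IsAlg S P := hP.1

@[reducible]
noncomputable def lattice (hP : IsBooleanAlg S P) : Lattice P :=
  { (inferInstance : PartialOrder P) with
    sup := fun x y => ⟨(hP.2.1 x x.2 y y.2).2.choose, (hP.2.1 x x.2 y y.2).2.choose_spec.1⟩
    le_sup_left := fun x y => (hP.2.1 x x.2 y y.2).2.choose_spec.2.1
    le_sup_right := fun x y => (hP.2.1 x x.2 y y.2).2.choose_spec.2.2.1
    sup_le := fun x y z hx hy => (hP.2.1 x x.2 y y.2).2.choose_spec.2.2.2 z z.2 hx hy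
    inf := fun x y => ⟨(hP.2.1 x x.2 y y.2).1.choose, (hP.2.1 x x.2 y y.2).1.choose_spec.1⟩
    inf_le_left := fun x y => (hP.2.1 x x.2 y y.2).1.choose_spec.2.1
    inf_le_right := fun x y => (hP.2.1 x x.2 y y.2).1.choose_spec.2.2.1
    le_inf := fun x y z hy hz => (hP.2.1 y y.2 z z.2).1.choose_spec.2.2.2 x x.2 hy hz }

theorem isSupIn_sup (hP : IsBooleanAlg S P) (x y : P) :
    letI := hP.lattice
    IsSupIn S P x y ↑(x ⊔ y) :=
  (hP.2.1 x x.2 y y.2).2.choose_spec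

theorem isInfIn_inf (hP : IsBooleanAlg S P) (x y : P) :
    letI := hP.lattice
    IsInfIn S P x y ↑(x ⊓ y) :=
  (hP.2.1 x x.2 y y.2).1.choose_spec

@[reducible]
noncomputable def booleanAlgebra (hP : IsBooleanAlg S P) : BooleanAlgebra P :=
  letI := hP.lattice
  { DistribLattice.ofInfSupLe fun a b c => le_of_eq <| Subtype.ext <|
      hP.2.2.1 a a.2 b b.2 c c.2 _ _ _ _ _ (hP.isSupIn_sup b c) (hP.isInfIn_inf a (b ⊔ c))
        (hP.isInfIn_inf a b) (hP.isInfIn_inf a c) (hP.isSupIn_sup (a ⊓ b) (a ⊓ c)) with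
    compl := fun x => ⟨1 - x, hP.isAlg.sub_mem x.2⟩
    top := ⟨1, hP.isAlg.one_mem_s15⟩
    bot := ⟨0, hP.isAlg.zero_mem⟩
    le_top := fun x => hP.isAlg.le_one x.2
    bot_le := fun x => hP.isAlg.nonneg x.2
    inf_compl_le_bot := fun x => le_of_eq <| Subtype.ext <|
      (hP.isInfIn_inf x _).unique (hP.2.2.2 x x.2).1
    top_le_sup_compl := fun x => le_of_eq <| Subtype.ext <|
      (hP.2.2.2 x x.2).2.unique (hP.isSupIn_sup x _) }

theorem coe_sup_of_disjoint (hP : IsBooleanAlg S P) {x y : P} :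
    letI := hP.booleanAlgebra
    Disjoint x y → ((x ⊔ y : P) : S → ℝ) = x + y := by
  let := hP.booleanAlgebra
  intro h
  have hxy : x ≤ yᶜ := le_compl_iff_disjoint_right.2 h
  exact hP.isAlg.isSupIn_eq_add x.2 y.2 hxy (hP.isSupIn_sup x y)

theorem coe_finset_sup (hP : IsBooleanAlg S P) {ι : Type*} (s : Finset ι) (f : ι → P) :
    letI := hP.booleanAlgebra
    (s : Set ι).PairwiseDisjoint f →
      ((s.sup f : P) : S → ℝ) = ∑ i ∈ s, (f i : S → ℝ) := by
  let := hP.booleanAlgebra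
  induction s using Finset.cons_induction with
  | empty => intro; rfl
  | cons i s hi ih =>
    intro hf
    have hdisj : Disjoint (f i) (s.sup f) := Finset.disjoint_sup_right.2 fun j hj =>
      hf (mem_cons_self i s) (mem_cons_of_mem hj) fun hij => hi (hij ▸ hj)
    rw [sup_cons, sum_cons, hP.coe_sup_of_disjoint hdisj,
      ih (hf.subset (by simp))]

theorem isAtomOf_of_isAtom (hP : IsBooleanAlg S P) {x : P} :
    letI := hP.booleanAlgebra
    IsAtom x → IsAtomOf S P x := by
  let := hP.booleanAlgebra
  refine fun hx => ⟨x.2, fun h => hx.1 (Subtype.ext h), fun g hg hg0 hgx => ?_⟩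
  have : (⟨g, hg⟩ : P) = ⊥ ∨ ⟨g, hg⟩ = x := hx.le_iff.1 hgx
  exact congrArg Subtype.val (this.resolve_left fun h => hg0 (congrArg Subtype.val h))

theorem varying_of_mem (hP : IsBooleanAlg S P) {p : S → ℝ} (hp : p ∈ P) (h0 : p ≠ 0)
    (h1 : p ≠ 1) : Varying S p := by
  have hinf := (hP.2.2.2 p hp).1
  constructor
  · intro h
    have hle : p ≤ 1 - p := fun s => by
      simp only [Pi.sub_apply, Pi.one_apply]
      linarith [h s]
    exact h0 (le_antisymm (hinf.2.2.2 p hp le_rfl hle) (hP.isAlg.nonneg hp))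
  · intro h
    have hle : 1 - p ≤ p := fun s => by
      simp only [Pi.sub_apply, Pi.one_apply]
      linarith [h s]
    have : 1 - p ≤ 0 := hinf.2.2.2 _ (hP.isAlg.sub_mem hp) hle le_rfl
    exact h1 (le_antisymm (hP.isAlg.le_one hp) (by simpa using this))

theorem sum_atoms_eq_coe_sup (hP : IsBooleanAlg S P) {ι : Type*} :
    letI := hP.booleanAlgebra
    ∀ (e : ι ≃ {a : P // IsAtom a}) (I : Finset ι),
      ∑ i ∈ I, ((e i : P) : S → ℝ) = ↑(I.sup fun i => (e i : P)) := by
  let := hP.booleanAlgebra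
  intro e I
  exact (hP.coe_finset_sup I _ <| Set.pairwiseDisjoint_of_isAtom
    (Subtype.val_injective.comp e.injective) (fun i => (e i).2) _).symm

theorem sum_atoms_eq_one (hP : IsBooleanAlg S P) [Fintype P] {ι : Type*} [Fintype ι] :
    letI := hP.booleanAlgebra
    ∀ e : ι ≃ {a : P // IsAtom a}, ∑ i, ((e i : P) : S → ℝ) = 1 := by
  let := hP.booleanAlgebra
  intro e
  obtain ⟨t, ht⟩ := exists_finset_atoms_sup_eq (⊤ : P)
  have htop : univ.sup (fun i => (e i : P)) = ⊤ :=
    top_le_iff.1 <| ht ▸ Finset.sup_le fun a _ => by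
      simpa using le_sup (f := fun i => (e i : P)) (mem_univ (e.symm a))
  rw [hP.sum_atoms_eq_coe_sup e, htop]
  rfl

theorem eq_setOf_sum_atoms (hP : IsBooleanAlg S P) [Fintype P] {ι : Type*} :
    letI := hP.booleanAlgebra
    ∀ e : ι ≃ {a : P // IsAtom a},
      P = {f | ∃ I : Finset ι, f = ∑ i ∈ I, ((e i : P) : S → ℝ)} := by
  let := hP.booleanAlgebra
  intro e
  ext f
  simp only [Set.mem_ofPred_eq, hP.sum_atoms_eq_coe_sup e]
  constructor
  · intro hf
    obtain ⟨t, ht⟩ := exists_finset_atoms_sup_eq (⟨f, hf⟩ : P)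
    refine ⟨t.map e.symm.toEmbedding, ?_⟩
    rw [sup_map]
    simp [Function.comp_def, ht]
  · rintro ⟨I, rfl⟩
    exact Subtype.prop _

end IsBooleanAlg

theorem stmt_15_general {S : Type*} {n : ℕ} (hn : 2 ≤ n)
    {P : Set (S → ℝ)} (hP : IsBooleanAlg S P) (hcard : P.ncard = 2 ^ n) :
    ∃ p : Fin n → (S → ℝ),
      (∀ i, p i ∈ P ∧ Varying S (p i) ∧ IsAtomOf S P (p i)) ∧
      ∑ i, p i = 1 ∧
      P = {f | ∃ I : Finset (Fin n), f = ∑ i ∈ I, p i} := by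
  have hfin : P.Finite := Set.finite_of_ncard_ne_zero (by simp [hcard])
  let := hfin.fintype
  let := hP.booleanAlgebra
  have hatoms : Nat.card {a : P // IsAtom a} = n := Nat.pow_right_injective le_rfl <| by
    beta_reduce
    rw [← card_eq_two_pow_card_atoms, Nat.card_coe_set_eq, hcard]
  let e := (Finite.equivFinOfCardEq hatoms).symm
  have : Nontrivial (Fin n) := Fin.nontrivial_iff_two_le.2 hn
  refine ⟨fun i => (e i : P), fun i => ⟨(e i).1.2, hP.varying_of_mem (e i).1.2 ?_ ?_,
    hP.isAtomOf_of_isAtom (e i).2⟩, hP.sum_atoms_eq_one e, hP.eq_setOf_sum_atoms e⟩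
  · exact fun h => (e i).2.1 (Subtype.ext h)
  · obtain ⟨j, hji⟩ := exists_ne i
    have hne : (e i : P) ≠ e j := fun h => hji (e.injective (Subtype.ext h)).symm
    exact fun h => (e i).2.ne_top_of_ne (e j).2 hne (Subtype.ext h)

theorem stmt_15 {S : Type*} [Nonempty S] {n : ℕ} (hn : 2 ≤ n)
    {P : Set (S → ℝ)} (hP : IsBooleanAlg S P) (hcard : P.ncard = 2 ^ n) :
    ∃ p : Fin n → (S → ℝ),
      (∀ i, p i ∈ P ∧ Varying S (p i) ∧ IsAtomOf S P (p i)) ∧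
      ∑ i, p i = 1 ∧
      P = {f | ∃ I : Finset (Fin n), f = ∑ i ∈ I, p i} :=
  stmt_15_general hn hP hcard
end
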